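/- arXiv:1302.5569 — 2 statements merged into one kernel-verified Lean document; each statement's English description precedes it below -/
import Mathlib

section
/- Let \mathfrak{g} be a finite-dimensional real unimodular Lie algebra with an abelian complex structure J such that \mathfrak{h} = [\mathfrak{g},\mathfrak{g}] + J[\mathfrak{g},\mathfrak{g}] is a proper abelian ideal. If \mathfrak{g} admits a symplectic form \Omega taming J (i.e. a closed nondegenerate 2-form with \Omega(X,JX) > 0 for all X \neq 0), then [\mathfrak{g}, \mathfrak{h}] = 0; in particular \mathfrak{g} is nilpotent (2-step). -/
/-!
Fix `x` and `y ∈ 𝔥`, and put `u = ⁅x, y⁆`, `v = ⁅J x, y⁆`. As `𝔥` is abelian, closedness of `Ω`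
makes `(a, b) ↦ Ω ⁅x, a⁆ b` symmetric on `𝔥`; as `⁅x, J x⁆ ∈ 𝔤¹ ⊆ 𝔥` commutes with `y`, the Jacobi
identity gives `⁅x, v⁆ = ⁅J x, u⁆`. Together these force `Ω u v = Ω v u`, hence `Ω u v = 0` by
skew-symmetry, and with `⁅x, J u⁆ = -⁅J x, u⁆` they give `Ω u (J u) = -Ω u v = 0`, so `u = 0` by
taming. Thus `𝔤¹ ⊆ 𝔥` is central and `𝔤` is 2-step nilpotent.
-/

section AbelianComplexStructure

variable {L : Type*} [LieRing L] {J : L → L}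

theorem lie_apply_right_eq_neg_lie_apply_left (hJ2 : ∀ x, J (J x) = -x)
    (hab : ∀ X Y, ⁅J X, J Y⁆ = ⁅X, Y⁆) (x w : L) : ⁅x, J w⁆ = -⁅J x, w⁆ := by
  rw [← hab x (J w), hJ2, lie_neg]

variable {R : Type*} [CommRing R] [LieAlgebra R L] (Ω : L →ₗ[R] L →ₗ[R] R)

theorem apply_lie_comm_of_lie_eq_zero
    (hclosed : ∀ X Y Z : L, Ω ⁅X, Y⁆ Z + Ω ⁅Y, Z⁆ X + Ω ⁅Z, X⁆ Y = 0)
    ⦃u v : L⦄ (huv : ⁅u, v⁆ = 0) (x : L) : Ω ⁅x, u⁆ v = Ω ⁅x, v⁆ u := by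
  have h := hclosed x u v
  rw [huv, ← lie_skew v x, map_zero, map_neg] at h
  simp only [LinearMap.zero_apply, LinearMap.neg_apply] at h
  linear_combination h

variable [LinearOrder R] [IsStrictOrderedRing R]

theorem apply_lie_apply_lie_eq_zero (hJ2 : ∀ x, J (J x) = -x)
    (hab : ∀ X Y, ⁅J X, J Y⁆ = ⁅X, Y⁆)
    (hskew : ∀ X Y : L, Ω X Y = -Ω Y X)
    (hclosed : ∀ X Y Z : L, Ω ⁅X, Y⁆ Z + Ω ⁅Y, Z⁆ X + Ω ⁅Z, X⁆ Y = 0)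
    {H : Set L} (hH_abelian : ∀ y ∈ H, ∀ z ∈ H, ⁅y, z⁆ = 0) (hH_J : ∀ z ∈ H, J z ∈ H)
    (hH_lie : ∀ x y : L, ⁅x, y⁆ ∈ H) (x : L) {y : L} (hy : y ∈ H) :
    Ω ⁅x, y⁆ (J ⁅x, y⁆) = 0 := by
  set u := ⁅x, y⁆
  set v := ⁅J x, y⁆
  have hsymm := apply_lie_comm_of_lie_eq_zero Ω hclosed
  have hswap : ⁅x, v⁆ = ⁅J x, u⁆ := by
    have hx := leibniz_lie x (J x) y
    rwa [hH_abelian _ (hH_lie x (J x)) y hy, zero_add] at hx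
  have huv : Ω u v = 0 := by
    have h₁ : Ω u v = Ω ⁅x, v⁆ y := hsymm (hH_abelian y hy v (hH_lie _ _)) x
    have h₂ : Ω ⁅J x, u⁆ y = Ω v u := hsymm (hH_abelian u (hH_lie _ _) y hy) (J x)
    linarith [hskew u v, hswap ▸ h₁]
  calc Ω u (J u) = Ω ⁅x, J u⁆ y := hsymm (hH_abelian y hy _ (hH_J u (hH_lie _ _))) x
    _ = -Ω ⁅x, v⁆ y := by
      rw [lie_apply_right_eq_neg_lie_apply_left hJ2 hab, ← hswap, map_neg, LinearMap.neg_apply]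
    _ = -Ω u v := by rw [hsymm (hH_abelian v (hH_lie _ _) y hy) x]
    _ = 0 := by rw [huv, neg_zero]

theorem lie_eq_zero_of_tame (hJ2 : ∀ x, J (J x) = -x) (hab : ∀ X Y, ⁅J X, J Y⁆ = ⁅X, Y⁆)
    (hskew : ∀ X Y : L, Ω X Y = -Ω Y X)
    (hclosed : ∀ X Y Z : L, Ω ⁅X, Y⁆ Z + Ω ⁅Y, Z⁆ X + Ω ⁅Z, X⁆ Y = 0)
    (htame : ∀ X : L, X ≠ 0 → 0 < Ω X (J X))
    {H : Set L} (hH_abelian : ∀ y ∈ H, ∀ z ∈ H, ⁅y, z⁆ = 0) (hH_J : ∀ z ∈ H, J z ∈ H)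
    (hH_lie : ∀ x y : L, ⁅x, y⁆ ∈ H) (x : L) {y : L} (hy : y ∈ H) : ⁅x, y⁆ = 0 := by
  by_contra hne
  exact (htame _ hne).ne'
    (apply_lie_apply_lie_eq_zero Ω hJ2 hab hskew hclosed hH_abelian hH_J hH_lie x hy)

end AbelianComplexStructure

theorem LieAlgebra.isNilpotent_of_forall_lie_derivedSeries_one_eq_zero
    {R L : Type*} [CommRing R] [LieRing L] [LieAlgebra R L]
    (h : ∀ x : L, ∀ y ∈ derivedSeries R L 1, ⁅x, y⁆ = 0) : LieRing.IsNilpotent L := by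
  refine (LieModule.isNilpotent_iff R L L).mpr ⟨1 + 1, ?_⟩
  rw [LieModule.lowerCentralSeries_succ, eq_bot_iff, LieSubmodule.lie_le_iff]
  intro x _ y hy
  rw [h x y hy]
  exact zero_mem _

theorem stmt10_general (g : Type*) [LieRing g] [LieAlgebra ℝ g]
    (J : g →ₗ[ℝ] g) (hJ2 : ∀ x : g, J (J x) = -x)
    (hab : ∀ X Y : g, ⁅J X, J Y⁆ = ⁅X, Y⁆)
    (inH : g → Prop)
    (hHdef : ∀ z : g, inH z ↔ ∃ a ∈ LieAlgebra.derivedSeries ℝ g 1,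
      ∃ b ∈ LieAlgebra.derivedSeries ℝ g 1, z = a + J b)
    (habH : ∀ y z : g, inH y → inH z → ⁅y, z⁆ = 0)
    (Ω : g →ₗ[ℝ] g →ₗ[ℝ] ℝ)
    (hskew : ∀ X Y : g, Ω X Y = -Ω Y X)
    (hclosed : ∀ X Y Z : g, Ω ⁅X, Y⁆ Z + Ω ⁅Y, Z⁆ X + Ω ⁅Z, X⁆ Y = 0)
    (htame : ∀ X : g, X ≠ 0 → 0 < Ω X (J X)) :
    (∀ X Y : g, inH Y → ⁅X, Y⁆ = 0) ∧ LieRing.IsNilpotent g := by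
  have hH_J : ∀ z, inH z → inH (J z) := by
    intro z hz
    obtain ⟨a, ha, b, hb, rfl⟩ := (hHdef z).mp hz
    exact (hHdef _).mpr ⟨-b, neg_mem hb, a, ha, by rw [map_add, hJ2]; abel⟩
  have hH_derived : ∀ z ∈ LieAlgebra.derivedSeries ℝ g 1, inH z := fun z hz =>
    (hHdef z).mpr ⟨z, hz, 0, zero_mem _, by rw [map_zero, add_zero]⟩
  have hH_lie : ∀ x y : g, inH ⁅x, y⁆ := fun x y =>
    hH_derived _ (LieSubmodule.lie_mem_lie (LieSubmodule.mem_top x) (LieSubmodule.mem_top y))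
  have hcentral : ∀ X Y : g, inH Y → ⁅X, Y⁆ = 0 := fun X _ hY =>
    lie_eq_zero_of_tame (H := {z | inH z}) Ω hJ2 hab hskew hclosed htame
      (fun y hy z hz => habH y z hy hz) hH_J hH_lie X hY
  exact ⟨hcentral, LieAlgebra.isNilpotent_of_forall_lie_derivedSeries_one_eq_zero (R := ℝ)
    fun x y hy => hcentral x y (hH_derived y hy)⟩

/-- Let `𝔤` be unimodular with an abelian complex structure `J` such that
`𝔥 = 𝔤¹ + J𝔤¹` is a proper abelian ideal. If `𝔤` admits a symplectic form taming
`J`, then `[𝔤, 𝔥] = 0`; in particular `𝔤` is nilpotent. -/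
theorem stmt10 (g : Type*) [LieRing g] [LieAlgebra ℝ g] [Module.Finite ℝ g]
    (hunimod : ∀ X : g, LinearMap.trace ℝ g (LieAlgebra.ad ℝ g X) = 0)
    (J : g →ₗ[ℝ] g) (hJ2 : ∀ x : g, J (J x) = -x)
    (hab : ∀ X Y : g, ⁅J X, J Y⁆ = ⁅X, Y⁆)
    (inH : g → Prop)
    (hHdef : ∀ z : g, inH z ↔ ∃ a ∈ LieAlgebra.derivedSeries ℝ g 1,
      ∃ b ∈ LieAlgebra.derivedSeries ℝ g 1, z = a + J b)
    (habH : ∀ y z : g, inH y → inH z → ⁅y, z⁆ = 0)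
    (hidH : ∀ x y : g, inH y → inH ⁅x, y⁆)
    (hproper : ∃ x : g, ¬ inH x)
    (Ω : g →ₗ[ℝ] g →ₗ[ℝ] ℝ)
    (hskew : ∀ X Y : g, Ω X Y = -Ω Y X)
    (hclosed : ∀ X Y Z : g, Ω ⁅X, Y⁆ Z + Ω ⁅Y, Z⁆ X + Ω ⁅Z, X⁆ Y = 0)
    (hnondeg : ∀ X : g, (∀ Y : g, Ω X Y = 0) → X = 0)
    (htame : ∀ X : g, X ≠ 0 → 0 < Ω X (J X)) :
    (∀ X Y : g, inH Y → ⁅X, Y⁆ = 0) ∧ LieRing.IsNilpotent g :=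
  stmt10_general g J hJ2 hab inH hHdef habH Ω hskew hclosed htame
end

section
/- Let \mathfrak{g} be a finite-dimensional real Lie algebra with abelian complex structure J, let \mathfrak{h} be an abelian J-invariant ideal, let \Omega be a closed 2-form on \mathfrak{g}, and fix X \in \mathfrak{g}. Then the bilinear forms B_X(Y,Z) = \Omega([X,Y],Z) and B'_X(Y,Z) = \Omega([JX,Y],Z) on \mathfrak{h} are both symmetric, and B'_X(Y,Z) = -B_X(JY,Z) for all Y,Z \in \mathfrak{h}. -/
/-! The cocycle identity for `Ω` at `(W, Y, Z)` loses its middle term when `[Y, Z] = 0`, which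
makes `(Y, Z) ↦ Ω([W, Y], Z)` symmetric on the abelian ideal for every `W`, in particular for
`W = X` and `W = JX`. The relation between the two forms comes from `[JX, Y] = -[X, JY]`,
obtained by writing `Y = -J(JY)` and using that `J` is abelian. -/

theorem apply_lie_apply_comm_of_lie_eq_zero {R L M : Type*} [CommRing R] [LieRing L]
    [LieAlgebra R L] [AddCommGroup M] [Module R M] (Ω : L →ₗ[R] L →ₗ[R] M)
    (hclosed : ∀ X Y Z : L, Ω ⁅X, Y⁆ Z + Ω ⁅Y, Z⁆ X + Ω ⁅Z, X⁆ Y = 0)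
    (W : L) {Y Z : L} (hYZ : ⁅Y, Z⁆ = 0) :
    Ω ⁅W, Y⁆ Z = Ω ⁅W, Z⁆ Y := by
  have h := hclosed W Y Z
  rw [hYZ, ← lie_skew Z W, map_zero, LinearMap.zero_apply, add_zero, map_neg,
    LinearMap.neg_apply, ← sub_eq_add_neg, sub_eq_zero] at h
  exact h

theorem lie_apply_left_eq_neg_lie_apply_right {L : Type*} [LieRing L] (J : L → L)
    (hJ2 : ∀ x : L, J (J x) = -x) (hab : ∀ X Y : L, ⁅J X, J Y⁆ = ⁅X, Y⁆) (X Y : L) :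
    ⁅J X, Y⁆ = -⁅X, J Y⁆ := by
  rw [← hab X (J Y), hJ2, lie_neg, neg_neg]

theorem stmt11_general (g : Type*) [LieRing g] [LieAlgebra ℝ g]
    (J : g →ₗ[ℝ] g) (hJ2 : ∀ x : g, J (J x) = -x)
    (hab : ∀ X Y : g, ⁅J X, J Y⁆ = ⁅X, Y⁆)
    (inH : g → Prop)
    (habH : ∀ y z : g, inH y → inH z → ⁅y, z⁆ = 0)
    (Ω : g →ₗ[ℝ] g →ₗ[ℝ] ℝ)
    (hclosed : ∀ X Y Z : g, Ω ⁅X, Y⁆ Z + Ω ⁅Y, Z⁆ X + Ω ⁅Z, X⁆ Y = 0)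
    (X : g) :
    (∀ Y Z : g, inH Y → inH Z → Ω ⁅X, Y⁆ Z = Ω ⁅X, Z⁆ Y) ∧
    (∀ Y Z : g, inH Y → inH Z → Ω ⁅J X, Y⁆ Z = Ω ⁅J X, Z⁆ Y) ∧
    (∀ Y Z : g, inH Y → inH Z → Ω ⁅J X, Y⁆ Z = -Ω ⁅X, J Y⁆ Z) := by
  refine ⟨fun Y Z hY hZ => ?_, fun Y Z hY hZ => ?_, fun Y Z _ _ => ?_⟩
  · exact apply_lie_apply_comm_of_lie_eq_zero Ω hclosed X (habH Y Z hY hZ)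
  · exact apply_lie_apply_comm_of_lie_eq_zero Ω hclosed (J X) (habH Y Z hY hZ)
  · rw [lie_apply_left_eq_neg_lie_apply_right J hJ2 hab, map_neg, LinearMap.neg_apply]

/-- For an abelian complex structure `J`, an abelian `J`-invariant ideal `𝔥`, a
closed 2-form `Ω` and a fixed `X`, the forms `B_X(Y,Z)=Ω([X,Y],Z)` and
`B'_X(Y,Z)=Ω([JX,Y],Z)` on `𝔥` are symmetric and `B'_X(Y,Z) = -B_X(JY,Z)`. -/
theorem stmt11 (g : Type*) [LieRing g] [LieAlgebra ℝ g] [Module.Finite ℝ g]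
    (J : g →ₗ[ℝ] g) (hJ2 : ∀ x : g, J (J x) = -x)
    (hab : ∀ X Y : g, ⁅J X, J Y⁆ = ⁅X, Y⁆)
    (inH : g → Prop)
    (habH : ∀ y z : g, inH y → inH z → ⁅y, z⁆ = 0)
    (hidH : ∀ x y : g, inH y → inH ⁅x, y⁆)
    (hJH : ∀ y : g, inH y → inH (J y))
    (Ω : g →ₗ[ℝ] g →ₗ[ℝ] ℝ)
    (hskew : ∀ X Y : g, Ω X Y = -Ω Y X)
    (hclosed : ∀ X Y Z : g, Ω ⁅X, Y⁆ Z + Ω ⁅Y, Z⁆ X + Ω ⁅Z, X⁆ Y = 0)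
    (X : g) :
    (∀ Y Z : g, inH Y → inH Z → Ω ⁅X, Y⁆ Z = Ω ⁅X, Z⁆ Y) ∧
    (∀ Y Z : g, inH Y → inH Z → Ω ⁅J X, Y⁆ Z = Ω ⁅J X, Z⁆ Y) ∧
    (∀ Y Z : g, inH Y → inH Z → Ω ⁅J X, Y⁆ Z = -Ω ⁅X, J Y⁆ Z) :=
  stmt11_general g J hJ2 hab inH habH Ω hclosed X
end
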